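/- Let k ≥ 2 be an integer and let a : ℕ₀ → ℂ be a multiplicative k-automatic sequence such that there exists a threshold p₀ with a(p^α) ≠ 0 for every prime p ≥ p₀ and every α ∈ ℕ. Then there exists a threshold p₃ such that for every prime p > p₃, the identity a(p·n) = a(p)·a(n) holds for almost all n ∈ ℕ, in the sense that the set of n for which it fails has upper Banach density zero. -/

import Mathlib

/-!
Fix a large prime `p`; we show `a (p ^ (β + 1)) = a p * a (p ^ β)` for every `β`, which makes
`a (p * n) = a p * a n` hold for every `n ≥ 1`, so that the exceptional set is empty.

By pigeonhole on the finitely many pairs of state maps there are base-`k ^ W` digits `v` and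
`v + d` (multiples of `p₀!` with `p ∤ d`) that act in the same way on the automaton, and so do
`p ^ β v` and `p ^ β (v + d)`. Hence all numbers `M = 1 + k ^ g X`, where `X` has `m` digits
`v + d`, its other digits `v` and top digit `p₀!`, lead the automaton to the same state, and so
do all `p ^ β M`. If `k ^ W ≡ 1 [MOD p ^ 2]`, the residue of `M` mod `p ^ 2` moves by the unit
`k ^ g d` as `m` increases, so some `M₁ ≡ p` and some `M₂ ≡ 1 [MOD p ^ 2]`; and
`M₂ ≡ 1 [MOD p₀!]` has no prime factor below `p₀`, so `a M₂ ≠ 0`. Writing `M₁ = p W` with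
`p ∤ W`, the equalities `a M₁ = a M₂` and `a (p ^ β M₁) = a (p ^ β M₂)` expand by
multiplicativity to the claim.
-/

open scoped BigOperators

namespace MultAuto

/-- Base-`k` value of a word over `Σ_k` (most significant digit first); `[ε]_k = 0`. -/
def valk (k : ℕ) (u : List ℕ) : ℕ := u.foldl (fun acc d => k * acc + d) 0

/-- `u` is a word over the alphabet `Σ_k = {0,…,k-1}`. -/
def IsWord (k : ℕ) (u : List ℕ) : Prop := ∀ d ∈ u, d < k

/-- `u` has no leading zeros (the empty word qualifies). -/
def NoLeadZero : List ℕ → Prop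
  | [] => True
  | d :: _ => d ≠ 0

/-- `wpow v l` is the `l`-fold concatenation `v^l`. -/
def wpow (v : List ℕ) (l : ℕ) : List ℕ := (List.replicate l v).flatten

/-- Transition function of a word: `δ_{uv} = δ_u ∘ δ_v`. -/
def deltaW {S : Type*} (δ : ℕ → S → S) : List ℕ → S → S
  | [] => id
  | d :: t => δ d ∘ deltaW δ t

/-- `a : ℕ → ℂ` is a `k`-automatic sequence. -/
def IsAutomatic (k : ℕ) (a : ℕ → ℂ) : Prop :=
  ∃ (S : Type) (_ : Fintype S) (s₀ : S) (δ : ℕ → S → S) (τ : S → ℂ),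
    ∀ u : List ℕ, IsWord k u → NoLeadZero u → a (valk k u) = τ (deltaW δ u s₀)

/-- `a` is multiplicative: `a (m n) = a m * a n` for coprime positive `m, n`. -/
def IsMult (a : ℕ → ℂ) : Prop :=
  ∀ m n : ℕ, 0 < m → 0 < n → Nat.Coprime m n → a (m * n) = a m * a n

/-- The word `u_r v_r^{l_r} u_{r-1} ⋯ u_1 v_1^{l_1} u_0`. -/
def aridWord (u v : ℕ → List ℕ) (l : ℕ → ℕ) : ℕ → List ℕ
  | 0 => u 0
  | r + 1 => u (r + 1) ++ wpow (v (r + 1)) (l (r + 1)) ++ aridWord u v l r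

/-- `A` is a basic arid set of rank ≤ r in base k. -/
def BasicArid (k r : ℕ) (A : Set ℕ) : Prop :=
  ∃ u v : ℕ → List ℕ, (∀ i, IsWord k (u i)) ∧ (∀ i, IsWord k (v i)) ∧
    A = {n | ∃ l : ℕ → ℕ, n = valk k (aridWord u v l r)}

/-- `A` is an arid set of rank ≤ r: a finite union of basic arid sets of rank ≤ r. -/
def AridOfRank (k r : ℕ) (A : Set ℕ) : Prop :=
  ∃ (m : ℕ) (B : Fin m → Set ℕ), (∀ j, BasicArid k r (B j)) ∧ A = ⋃ j, B j

/-- `A` is arid (in base `k`). -/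
def Arid (k : ℕ) (A : Set ℕ) : Prop := ∃ r, AridOfRank k r A

/-- `χ : ℕ → ℂ` is a Dirichlet character of modulus `m`: completely multiplicative,
`m`-periodic, and nonvanishing exactly at integers coprime to `m`. -/
def IsDirichletLike (m : ℕ) (χ : ℕ → ℂ) : Prop :=
  0 < m ∧ (∀ a b : ℕ, 0 < a → 0 < b → χ (a * b) = χ a * χ b) ∧
  (∀ n : ℕ, 0 < n → χ (n + m) = χ n) ∧
  (∀ n : ℕ, 0 < n → (χ n ≠ 0 ↔ Nat.Coprime n m))

/-- `(n)_k^l`: the last `l` base-`k` digits of `n`, padded with leading zeros,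
most significant digit first. -/
def padk (k l n : ℕ) : List ℕ := (List.range l).reverse.map fun i => n / k ^ i % k

/-- The equivalence `n₁ ∼ n₂` on `ℕ` induced by the transition maps `δ`. -/
def EqvN (k : ℕ) {S : Type*} (δ : ℕ → S → S) (n₁ n₂ : ℕ) : Prop :=
  ∃ l₀ : ℕ, ∀ l ≥ l₀, deltaW δ (padk k l n₁) = deltaW δ (padk k l n₂)

/-- `E ⊆ ℕ` has upper Banach density zero. -/
def UpperBanachDensityZero (E : Set ℕ) : Prop :=
  ∀ ε : ℝ, 0 < ε → ∃ N₀ : ℕ, ∀ N ≥ N₀, ∀ M : ℕ,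
    ((E ∩ Set.Ico M (M + N)).ncard : ℝ) ≤ ε * N

def digitWord (k n : ℕ) : List ℕ := (Nat.digits k n).reverse

theorem valk_reverse (k : ℕ) (l : List ℕ) : valk k l.reverse = Nat.ofDigits k l := by
  induction l with
  | nil => rfl
  | cons d l ih =>
    simp only [valk, List.reverse_cons, List.foldl_append, List.foldl_cons, List.foldl_nil,
      Nat.ofDigits_cons] at ih ⊢
    rw [ih]; ring

theorem valk_digitWord (k n : ℕ) : valk k (digitWord k n) = n := by
  rw [digitWord, valk_reverse, Nat.ofDigits_digits]

theorem isWord_digitWord {k : ℕ} (hk : 1 < k) (n : ℕ) : IsWord k (digitWord k n) :=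
  fun _ hd => Nat.digits_lt_base hk (List.mem_reverse.mp hd)

theorem noLeadZero_digitWord (k n : ℕ) : NoLeadZero (digitWord k n) := by
  rcases hw : digitWord k n with _ | ⟨d, w⟩
  · trivial
  · have hn : n ≠ 0 := by rintro rfl; simp [digitWord] at hw
    have hd : (Nat.digits k n).getLast? = some d := by
      rw [← List.head?_reverse, ← digitWord, hw, List.head?_cons]
    rw [List.getLast?_eq_some_getLast (Nat.digits_ne_nil_iff_ne_zero.mpr hn), Option.some_inj] at hd
    exact hd ▸ Nat.getLast_digit_ne_zero k hn

theorem IsAutomatic.exists_deltaW_digitWord {k : ℕ} {a : ℕ → ℂ} (ha : IsAutomatic k a)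
    (hk : 1 < k) : ∃ (S : Type) (_ : Fintype S) (s₀ : S) (δ : ℕ → S → S) (τ : S → ℂ),
      ∀ n, a n = τ (deltaW δ (digitWord k n) s₀) := by
  obtain ⟨S, hS, s₀, δ, τ, h⟩ := ha
  refine ⟨S, hS, s₀, δ, τ, fun n => ?_⟩
  simpa only [valk_digitWord] using h _ (isWord_digitWord hk n) (noLeadZero_digitWord k n)

theorem padk_reverse_eq {k L y : ℕ} (hk : 1 < k) (hy : y < k ^ L) :
    (padk k L y).reverse = Nat.digits k y ++ List.replicate (L - (Nat.digits k y).length) 0 := by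
  have hlen := (Nat.digits_length_le_iff hk y).mpr hy
  apply List.ext_getElem (by simp [padk]; omega)
  intro i hi _
  simp only [padk, List.map_reverse, List.reverse_reverse, List.getElem_map, List.getElem_range]
  rw [← Nat.getD_digits y i hk, List.getElem_append]
  split_ifs with h
  · simp [h]
  · simp [List.getElem?_eq_none (Nat.le_of_not_lt h)]

theorem digitWord_add_pow_mul {k L x y : ℕ} (hk : 1 < k) (hx : x ≠ 0) (hy : y < k ^ L) :
    digitWord k (y + k ^ L * x) = digitWord k x ++ padk k L y := by
  have hlen := (Nat.digits_length_le_iff hk y).mpr hy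
  rw [digitWord, digitWord, ← List.reverse_reverse (padk k L y), ← List.reverse_append,
    padk_reverse_eq hk hy, Nat.digits_append_zeroes_append_digits hk (Nat.pos_of_ne_zero hx),
    Nat.add_sub_cancel' hlen]

def blockFamily (k g W N v d Q m : ℕ) : ℕ :=
  1 + k ^ g * (∑ r ∈ Finset.range N, (v + if r < m then d else 0) * k ^ (W * r) +
    k ^ (W * N) * Q)

theorem natCast_blockFamily {n k g W N v d Q m : ℕ} (hkW : (k : ZMod n) ^ W = 1) (hm : m ≤ N) :
    (blockFamily k g W N v d Q m : ZMod n) =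
      blockFamily k g W N v d Q 0 + m * (k ^ g * d) := by
  have hsum : ∀ m ≤ N, ∑ r ∈ Finset.range N, ((if r < m then d else 0 : ℕ) : ZMod n) = m * d := by
    intro m hm
    rw [← Nat.cast_sum, ← Finset.sum_range_add_sum_Ico _ hm,
      Finset.sum_congr rfl (g := fun _ => d) fun r hr => if_pos (Finset.mem_range.mp hr),
      Finset.sum_congr rfl (g := fun _ => 0) fun r hr => if_neg (Finset.mem_Ico.mp hr).1.not_gt]
    simp
  have hpow : ∀ r, (k : ZMod n) ^ (W * r) = 1 := fun r => by rw [pow_mul, hkW, one_pow]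
  simp only [blockFamily, Nat.cast_add, Nat.cast_mul, Nat.cast_pow, Nat.cast_one, Nat.cast_sum,
    hpow, mul_one, Finset.sum_add_distrib, hsum m hm, hsum 0 (Nat.zero_le N)]
  simp only [Finset.sum_const, Finset.card_range, nsmul_eq_mul]
  ring

theorem coprime_blockFamily {k g W N v d Q m c : ℕ} (hv : c ∣ v) (hd : c ∣ d) (hQ : c ∣ Q) :
    Nat.Coprime (blockFamily k g W N v d Q m) c := by
  obtain ⟨t, ht⟩ : c ∣ ∑ r ∈ Finset.range N, (v + if r < m then d else 0) * k ^ (W * r) +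
      k ^ (W * N) * Q := by
    refine dvd_add (Finset.dvd_sum fun r _ => Dvd.dvd.mul_right ?_ _) (hQ.mul_left _)
    split_ifs
    · exact dvd_add hv hd
    · simpa using hv
  rw [blockFamily, ht, show k ^ g * (c * t) = k ^ g * t * c by ring,
    Nat.coprime_add_mul_right_left]
  exact Nat.coprime_one_left c

theorem natCast_pow_totient_mul {k n : ℕ} (hkn : Nat.Coprime k n) (t : ℕ) :
    (k : ZMod n) ^ (n.totient * t) = 1 := by
  have h := (ZMod.natCast_eq_natCast_iff _ _ _).mpr (Nat.ModEq.pow_totient hkn)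
  push_cast at h
  rw [pow_mul, h, one_pow]

theorem exists_lt_lt_map_eq {β : Type*} [Fintype β] (f : ℕ → β) {p : ℕ}
    (hp : Fintype.card β < p) : ∃ i i', i < i' ∧ i' < p ∧ f i = f i' := by
  obtain ⟨i, i', hne, hf⟩ :=
    Fintype.exists_ne_map_eq_of_card_lt (fun i : Fin p => f i) (by simpa using hp)
  rcases lt_or_gt_of_ne (Fin.val_ne_of_ne hne) with h | h
  · exact ⟨i, i', h, i'.isLt, hf⟩
  · exact ⟨i', i, h, i.isLt, hf.symm⟩

theorem ZMod.exists_lt_add_mul_eq {n : ℕ} [NeZero n] {u : ZMod n} (hu : IsUnit u)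
    (z₀ z : ZMod n) : ∃ m < n, z₀ + m * u = z :=
  ⟨((z - z₀) * hu.unit⁻¹ : ZMod n).val, ZMod.val_lt _, by
    rw [ZMod.natCast_zmod_val, mul_assoc, hu.val_inv_mul, mul_one, add_sub_cancel]⟩

theorem exists_blockFamily_modEq {p k g t v d Q : ℕ} (hp : p.Prime) (hpk : ¬ p ∣ k)
    (hpd : ¬ p ∣ d) (N z : ℕ) (hN : p ^ 2 ≤ N) :
    ∃ m, blockFamily k g ((p ^ 2).totient * t) N v d Q m ≡ z [MOD p ^ 2] := by
  have : NeZero (p ^ 2) := ⟨pow_ne_zero 2 hp.ne_zero⟩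
  have hcop : ∀ x, ¬ p ∣ x → Nat.Coprime x (p ^ 2) := fun x hx =>
    (((hp.coprime_iff_not_dvd).mpr hx).symm).pow_right 2
  have hunit : IsUnit ((k ^ g * d : ℕ) : ZMod (p ^ 2)) :=
    (ZMod.isUnit_iff_coprime _ _).mpr (((hcop k hpk).pow_left g).mul_left (hcop d hpd))
  obtain ⟨m, hm, hmz⟩ := ZMod.exists_lt_add_mul_eq hunit (blockFamily k g _ N v d Q 0) z
  refine ⟨m, (ZMod.natCast_eq_natCast_iff _ _ _).mp ?_⟩
  rw [natCast_blockFamily (natCast_pow_totient_mul (hcop k hpk) t) (by omega), ← hmz]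
  push_cast
  ring

theorem not_dvd_of_modEq_one {m n : ℕ} (hm : 1 < m) (h : n ≡ 1 [MOD m]) : ¬ m ∣ n := by
  intro hd
  have h' : n % m = 1 % m := h
  rw [Nat.mod_eq_zero_of_dvd hd, Nat.mod_eq_of_lt hm] at h'
  exact zero_ne_one h'

section Automaton

variable {S : Type*} (δ : ℕ → S → S) {k : ℕ}

theorem deltaW_append (u w : List ℕ) : deltaW δ (u ++ w) = deltaW δ u ∘ deltaW δ w := by
  induction u with
  | nil => rfl
  | cons d u ih => simp only [List.cons_append, deltaW, ih, Function.comp_assoc]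

theorem deltaW_digitWord_add_pow_mul_congr (hk : 1 < k) {L x x' y y' : ℕ} (hx : x ≠ 0)
    (hx' : x' ≠ 0) (hy : y < k ^ L) (hy' : y' < k ^ L)
    (hxx' : deltaW δ (digitWord k x) = deltaW δ (digitWord k x'))
    (hyy' : deltaW δ (padk k L y) = deltaW δ (padk k L y')) :
    deltaW δ (digitWord k (y + k ^ L * x)) = deltaW δ (digitWord k (y' + k ^ L * x')) := by
  rw [digitWord_add_pow_mul hk hx hy, digitWord_add_pow_mul hk hx' hy', deltaW_append,
    deltaW_append, hxx', hyy']

theorem deltaW_digitWord_sum_blocks_congr (hk : 1 < k) {W : ℕ} {c c' : ℕ → ℕ} (N : ℕ)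
    (hc : ∀ r < N, c r < k ^ W) (hc' : ∀ r < N, c' r < k ^ W)
    (hcc' : ∀ r < N, deltaW δ (padk k W (c r)) = deltaW δ (padk k W (c' r)))
    {x x' : ℕ} (hx : x ≠ 0) (hx' : x' ≠ 0)
    (hxx' : deltaW δ (digitWord k x) = deltaW δ (digitWord k x')) :
    deltaW δ (digitWord k (∑ r ∈ Finset.range N, c r * k ^ (W * r) + k ^ (W * N) * x)) =
      deltaW δ (digitWord k (∑ r ∈ Finset.range N, c' r * k ^ (W * r) + k ^ (W * N) * x')) := by
  induction N generalizing x x' with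
  | zero => simpa using hxx'
  | succ N ih =>
    have hsplit : ∀ (c : ℕ → ℕ) (x : ℕ),
        ∑ r ∈ Finset.range (N + 1), c r * k ^ (W * r) + k ^ (W * (N + 1)) * x =
          ∑ r ∈ Finset.range N, c r * k ^ (W * r) + k ^ (W * N) * (c N + k ^ W * x) := by
      intro c x
      rw [Finset.sum_range_succ]
      ring
    rw [hsplit, hsplit]
    refine ih (fun r hr => hc r (by omega)) (fun r hr => hc' r (by omega))
      (fun r hr => hcc' r (by omega)) (by positivity) (by positivity) ?_
    exact deltaW_digitWord_add_pow_mul_congr δ hk hx hx' (hc N (by omega)) (hc' N (by omega))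
      hxx' (hcc' N (by omega))

theorem deltaW_digitWord_mul_blockFamily_congr (hk : 1 < k) {g W N v d Q e : ℕ} (he : e ≠ 0)
    (hQ : Q ≠ 0) (heg : e < k ^ g) (hevd : e * (v + d) < k ^ W)
    (hvd : deltaW δ (padk k W (e * v)) = deltaW δ (padk k W (e * (v + d)))) (m m' : ℕ) :
    deltaW δ (digitWord k (e * blockFamily k g W N v d Q m)) =
      deltaW δ (digitWord k (e * blockFamily k g W N v d Q m')) := by
  have hexpand : ∀ m : ℕ, e * blockFamily k g W N v d Q m =
      e + k ^ g * (∑ r ∈ Finset.range N, e * (v + if r < m then d else 0) * k ^ (W * r) +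
        k ^ (W * N) * (e * Q)) := by
    intro m
    simp only [blockFamily, mul_add, Finset.mul_sum]
    ring_nf
  have hblock : ∀ r m : ℕ, deltaW δ (padk k W (e * (v + if r < m then d else 0))) =
      deltaW δ (padk k W (e * v)) := by
    intro r m
    split_ifs
    · exact hvd.symm
    · rfl
  have hlt : ∀ r m : ℕ, e * (v + if r < m then d else 0) < k ^ W := fun r m =>
    lt_of_le_of_lt (Nat.mul_le_mul_left e (by split_ifs <;> omega)) hevd
  rw [hexpand, hexpand]
  refine deltaW_digitWord_add_pow_mul_congr δ hk (by positivity) (by positivity) heg heg ?_ rfl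
  exact deltaW_digitWord_sum_blocks_congr δ hk N (fun r _ => hlt r m) (fun r _ => hlt r m')
    (fun r _ => (hblock r m).trans (hblock r m').symm) (by positivity) (by positivity) rfl

theorem exists_modEq_deltaW_digitWord_eq [Fintype S] [DecidableEq S] (hk : 1 < k) {p c e : ℕ}
    (hp : p.Prime) (hpk : ¬ p ∣ k) (hpc : ¬ p ∣ c) (he : e ≠ 0)
    (hS : Fintype.card ((S → S) × (S → S)) < p) :
    ∃ M₁ M₂, M₁ ≡ p [MOD p ^ 2] ∧ M₂ ≡ 1 [MOD p ^ 2] ∧ Nat.Coprime M₂ c ∧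
      deltaW δ (digitWord k M₁) = deltaW δ (digitWord k M₂) ∧
      deltaW δ (digitWord k (e * M₁)) = deltaW δ (digitWord k (e * M₂)) := by
  have hc : c ≠ 0 := by rintro rfl; exact hpc (dvd_zero p)
  set W := (p ^ 2).totient * (e * c * p)
  set g := e + 1
  obtain ⟨i, i', hii', hi'p, hblocks⟩ := exists_lt_lt_map_eq
    (fun i => (deltaW δ (padk k W (c * i)), deltaW δ (padk k W (e * (c * i))))) hS
  obtain ⟨hblock₁, hblockₑ⟩ := Prod.ext_iff.mp hblocks
  have hvd : c * i + c * (i' - i) = c * i' := by rw [← mul_add, Nat.add_sub_cancel' hii'.le]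
  set M := blockFamily k g W (p ^ 2) (c * i) (c * (i' - i)) c
  have hstate : ∀ e', e' ≠ 0 → e' ≤ e →
      deltaW δ (padk k W (e' * (c * i))) = deltaW δ (padk k W (e' * (c * i + c * (i' - i)))) →
      ∀ m m', deltaW δ (digitWord k (e' * M m)) = deltaW δ (digitWord k (e' * M m')) := by
    intro e' he' he'e hblock
    refine deltaW_digitWord_mul_blockFamily_congr δ hk he' hc
      (lt_of_le_of_lt (by omega) (Nat.lt_pow_self hk)) ?_ hblock
    calc e' * (c * i + c * (i' - i)) ≤ e * (c * i') := by
          rw [hvd]; exact Nat.mul_le_mul_right _ he'e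
      _ < e * c * p := by
        rw [mul_assoc]
        exact Nat.mul_lt_mul_of_pos_left (Nat.mul_lt_mul_of_pos_left hi'p (by omega)) (by omega)
      _ ≤ W := Nat.le_mul_of_pos_left _ (Nat.totient_pos.mpr (pow_pos hp.pos 2))
      _ < k ^ W := Nat.lt_pow_self hk
  have hpd : ¬ p ∣ c * (i' - i) := fun h => (hp.dvd_mul.mp h).elim hpc
    fun h => absurd (Nat.le_of_dvd (by omega) h) (by omega)
  obtain ⟨m₁, hM₁⟩ : ∃ m, M m ≡ p [MOD p ^ 2] :=
    exists_blockFamily_modEq hp hpk hpd _ p le_rfl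
  obtain ⟨m₂, hM₂⟩ : ∃ m, M m ≡ 1 [MOD p ^ 2] :=
    exists_blockFamily_modEq hp hpk hpd _ 1 le_rfl
  exact ⟨M m₁, M m₂, hM₁, hM₂,
    coprime_blockFamily (dvd_mul_right c i) (dvd_mul_right c _) dvd_rfl,
    by simpa using hstate 1 one_ne_zero (by omega) (by simpa [hvd] using hblock₁) m₁ m₂,
    hstate e he le_rfl (hvd ▸ hblockₑ) m₁ m₂⟩

end Automaton

section Multiplicative

variable {a : ℕ → ℂ}

theorem IsMult.map_one (hmul : IsMult a) {m : ℕ} (hm : 0 < m) (ham : a m ≠ 0) : a 1 = 1 :=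
  (mul_eq_left₀ ham).mp (by rw [← hmul m 1 hm one_pos (Nat.coprime_one_right m), mul_one])

theorem IsMult.ne_zero_of_coprime_factorial (hmul : IsMult a) {p₀ : ℕ}
    (hdense : ∀ p : ℕ, p.Prime → p₀ ≤ p → ∀ α : ℕ, 0 < α → a (p ^ α) ≠ 0) {m : ℕ}
    (hm : m ≠ 0) (hcop : Nat.Coprime m p₀.factorial) : a m ≠ 0 := by
  induction m using Nat.recOnPrimePow with
  | zero => exact absurd rfl hm
  | one =>
    obtain ⟨q, hq₀, hq⟩ := Nat.exists_infinite_primes p₀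
    have haq : a q ≠ 0 := by simpa using hdense q hq hq₀ 1 one_pos
    rw [hmul.map_one hq.pos haq]
    exact one_ne_zero
  | prime_pow_mul m q n hq hqm hn ih =>
    have hm' : m ≠ 0 := right_ne_zero_of_mul hm
    have hq₀ : p₀ ≤ q := by
      by_contra! h
      have hdvd : q ∣ p₀.factorial := Nat.dvd_factorial hq.pos h.le
      exact hq.one_lt.ne' (Nat.Coprime.eq_one_of_dvd
        (hcop.coprime_dvd_left ((dvd_pow_self q hn.ne').mul_right m)) hdvd)
    rw [hmul _ _ (pow_pos hq.pos n) (Nat.pos_of_ne_zero hm')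
      (((hq.coprime_iff_not_dvd).mpr hqm).pow_left n)]
    exact mul_ne_zero (hdense q hq hq₀ n hn) (ih hm' (hcop.coprime_dvd_left (dvd_mul_left m _)))

theorem IsMult.map_pow_succ_of_modEq (hmul : IsMult a) {p M₁ M₂ : ℕ} (hp : p.Prime)
    (h₁ : M₁ ≡ p [MOD p ^ 2]) (h₂ : M₂ ≡ 1 [MOD p ^ 2]) (haM₂ : a M₂ ≠ 0) (β : ℕ)
    (h₀ : a M₁ = a M₂) (hβ : a (p ^ β * M₁) = a (p ^ β * M₂)) :
    a (p ^ (β + 1)) = a p * a (p ^ β) := by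
  have hpp : p ∣ p ^ 2 := dvd_pow_self p two_ne_zero
  obtain ⟨W, rfl⟩ : p ∣ M₁ :=
    Nat.modEq_zero_iff_dvd.mp ((h₁.of_dvd hpp).trans (Nat.modEq_zero_iff_dvd.mpr dvd_rfl))
  have hW : ¬ p ∣ W := not_dvd_of_modEq_one hp.one_lt
    (Nat.ModEq.mul_left_cancel' hp.ne_zero (by rwa [mul_one, ← pow_two]))
  have hM₂ : ¬ p ∣ M₂ := not_dvd_of_modEq_one hp.one_lt (h₂.of_dvd hpp)
  have hWpos : 0 < W := Nat.pos_of_ne_zero fun h => hW (h ▸ dvd_zero p)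
  have hM₂pos : 0 < M₂ := Nat.pos_of_ne_zero fun h => hM₂ (h ▸ dvd_zero p)
  have hcopW : ∀ j, Nat.Coprime (p ^ j) W := fun j => ((hp.coprime_iff_not_dvd).mpr hW).pow_left j
  have hcopM₂ : Nat.Coprime (p ^ β) M₂ := ((hp.coprime_iff_not_dvd).mpr hM₂).pow_left β
  refine mul_right_cancel₀ haM₂ ?_
  calc a (p ^ (β + 1)) * a M₂ = a (p ^ (β + 1)) * (a p * a W) := by
        rw [← h₀, hmul p W hp.pos hWpos (by simpa using hcopW 1)]
    _ = a p * a (p ^ β * (p * W)) := by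
        rw [← mul_assoc (p ^ β), ← pow_succ, hmul _ _ (pow_pos hp.pos _) hWpos (hcopW _)]
        ring
    _ = a p * a (p ^ β) * a M₂ := by
        rw [hβ, hmul _ _ (pow_pos hp.pos _) hM₂pos hcopM₂, mul_assoc]

theorem IsMult.map_mul_of_map_pow_succ (hmul : IsMult a) {p : ℕ} (hp : p.Prime)
    (hpow : ∀ β, a (p ^ (β + 1)) = a p * a (p ^ β)) {n : ℕ} (hn : 0 < n) :
    a (p * n) = a p * a n := by
  obtain ⟨e, n', hpn', rfl⟩ := Nat.exists_eq_pow_mul_and_not_dvd hn.ne' p hp.ne_one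
  have hn' : 0 < n' := Nat.pos_of_ne_zero fun h => hpn' (h ▸ dvd_zero p)
  have hcop : ∀ j, Nat.Coprime (p ^ j) n' := fun j =>
    ((hp.coprime_iff_not_dvd).mpr hpn').pow_left j
  rw [← mul_assoc, ← pow_succ', hmul _ _ (pow_pos hp.pos _) hn' (hcop _),
    hmul _ _ (pow_pos hp.pos _) hn' (hcop _), hpow, mul_assoc]

end Multiplicative

theorem upperBanachDensityZero_empty : UpperBanachDensityZero ∅ :=
  fun ε hε => ⟨0, fun N _ M => by
    simp only [Set.empty_inter, Set.ncard_empty, Nat.cast_zero]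
    positivity⟩

/-- in the dense case, for every sufficiently large prime `p` the identity
`a(pn) = a(p) a(n)` holds for almost all `n` (failure set of upper Banach density zero). -/
theorem stmt14 (k : ℕ) (hk : 2 ≤ k) (a : ℕ → ℂ)
    (ha : IsAutomatic k a) (hmul : IsMult a)
    (hdense : ∃ p₀ : ℕ, ∀ p : ℕ, p.Prime → p₀ ≤ p → ∀ α : ℕ, 0 < α → a (p ^ α) ≠ 0) :
    ∃ p₃ : ℕ, ∀ p : ℕ, p.Prime → p₃ < p →
      UpperBanachDensityZero {n : ℕ | 0 < n ∧ a (p * n) ≠ a p * a n} := by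
  obtain ⟨p₀, hdense⟩ := hdense
  obtain ⟨S, _, s₀, δ, τ, ha⟩ := ha.exists_deltaW_digitWord hk
  classical
  refine ⟨k + p₀ + Fintype.card ((S → S) × (S → S)), fun p hp hp₃ => ?_⟩
  have hpk : ¬ p ∣ k := fun h => absurd (Nat.le_of_dvd (by omega) h) (by omega)
  have hpc : ¬ p ∣ p₀.factorial := by rw [hp.dvd_factorial]; omega
  have hpow : ∀ β, a (p ^ (β + 1)) = a p * a (p ^ β) := by
    intro β
    obtain ⟨M₁, M₂, h₁, h₂, hcop, h₀, hβ⟩ := exists_modEq_deltaW_digitWord_eq δ hk hp hpk hpc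
      (pow_ne_zero β hp.ne_zero) (by omega)
    have hM₂ : M₂ ≠ 0 := by
      rintro rfl
      exact not_dvd_of_modEq_one (Nat.one_lt_pow two_ne_zero hp.one_lt) h₂ (dvd_zero _)
    exact hmul.map_pow_succ_of_modEq hp h₁ h₂ (hmul.ne_zero_of_coprime_factorial hdense hM₂ hcop)
      β (by rw [ha, ha, h₀]) (by rw [ha, ha, hβ])
  have hempty : {n : ℕ | 0 < n ∧ a (p * n) ≠ a p * a n} = ∅ :=
    Set.eq_empty_of_forall_notMem fun n ⟨hn, hne⟩ => hne (hmul.map_mul_of_map_pow_succ hp hpow hn)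
  rw [hempty]
  exact upperBanachDensityZero_empty

end MultAuto
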